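/- Let K be a T₁-structure and a ∈ K. For every L_A-term t(x₁,…,xₙ), all elements i₁,…,iₙ ∈ K with i₁ ≤ a, …, iₙ ≤ a, and every b ∈ K with b ≤ t(i₁,…,iₙ) (interpreting the term in K), there exist an L_A-term s(x₁,…,x_m) and elements j₁,…,j_m ∈ K with j₁ ≤ a, …, j_m ≤ a such that b = s(j₁,…,j_m) in K. Equivalently, the closure of the initial segment {x ∈ K : x ≤ a} under the operations 0, S, +, · of K is downward closed with respect to ≤. -/

import Mathlib

/-!
The values of terms at arguments `≤ a` contain everything `≤ a` and are closed under
`0, S, +, ·`; we show that they form a lower set, by induction on the term. The only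
nontrivial cases are `+` and `·`: if `b ≤ x + y` then either `b ≤ y` or `b = z + y` with
`z ≤ x` (subtract `y` from `b`), and if `b ≤ x · y` with `y ≠ 0` then `b = r + q · y` with
`r ≤ y` and `q ≤ x` (divide `b` by `y`). In both cases the cancellation axioms of `T₁` give
the bound on the new summand or factor.
-/

/-- A `T₁`-structure: a set `K` interpreting the language `L_A = {0, S, +, ·, ≤}` and
satisfying the (universal closures of the) axioms of the finite fragment `T₁`. -/
structure T1Structure (K : Type) where
  zero : K
  succ : K → K
  add : K → K → K
  mul : K → K → K
  le : K → K → Prop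
  add_zero : ∀ x, add x zero = x
  add_succ : ∀ x y, add x (succ y) = succ (add x y)
  mul_zero : ∀ x, mul x zero = zero
  mul_succ : ∀ x y, mul x (succ y) = add (mul x y) x
  le_zero_iff : ∀ x, le x zero ↔ x = zero
  le_succ_iff : ∀ x y, le x (succ y) ↔ x = succ y ∨ le x y
  le_total : ∀ x y, le x y ∨ le y x
  le_trans : ∀ x y z, le x y → le y z → le x z
  le_add_left : ∀ x z, le x (add z x)
  le_add_right : ∀ x z, le x (add x z)
  le_of_add_le_add : ∀ x y z, le (add x z) (add y z) → le x y
  le_of_mul_le_mul : ∀ x y z, z ≠ zero → le (mul x z) (mul y z) → le x y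
  ne_iff : ∀ x y, x ≠ y ↔ (le (succ x) y ∨ le (succ y) x)
  not_le_iff : ∀ x y, ¬ le x y ↔ le (succ y) x
  exists_add_of_le : ∀ x y, le x y → ∃ z, add z x = y
  exists_div_mod : ∀ x y, y ≠ zero → ∃ q r, x = add r (mul q y) ∧ le r y

/-- Terms of the language `L_A = {0, S, +, ·, ≤}` in the variables `x₁, …, xₙ`. -/
inductive ATerm (n : ℕ) : Type
  | var : Fin n → ATerm n
  | zero : ATerm n
  | succ : ATerm n → ATerm n
  | add : ATerm n → ATerm n → ATerm n
  | mul : ATerm n → ATerm n → ATerm n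

/-- Interpretation of an `L_A`-term in a `T₁`-structure `K` under an assignment of
elements of `K` to the variables. -/
def ATerm.eval {K : Type} (T : T1Structure K) {n : ℕ} :
    ATerm n → (Fin n → K) → K
  | .var i, v => v i
  | .zero, _ => T.zero
  | .succ t, v => T.succ (t.eval T v)
  | .add t s, v => T.add (t.eval T v) (s.eval T v)
  | .mul t s, v => T.mul (t.eval T v) (s.eval T v)

namespace ATerm

def rename {n m : ℕ} (f : Fin n → Fin m) : ATerm n → ATerm m
  | var i => var (f i)
  | zero => zero
  | succ t => succ (t.rename f)
  | add t s => add (t.rename f) (s.rename f)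
  | mul t s => mul (t.rename f) (s.rename f)

theorem eval_rename {K : Type} (T : T1Structure K) {n m : ℕ} (f : Fin n → Fin m)
    (t : ATerm n) (v : Fin m → K) :
    (t.rename f).eval T v = t.eval T (v ∘ f) := by
  induction t <;> simp [rename, eval, *]

end ATerm

namespace T1Structure

variable {K : Type} (T : T1Structure K)

theorem le_refl (x : K) : T.le x x :=
  (T.le_total x x).elim id id

theorem le_iff_not_succ_le {x y : K} : T.le x y ↔ ¬ T.le (T.succ y) x := by
  rw [← T.not_le_iff, not_not]

theorem succ_not_le (x : K) : ¬ T.le (T.succ x) x :=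
  T.le_iff_not_succ_le.1 (T.le_refl x)

theorem le_succ_self (x : K) : T.le x (T.succ x) :=
  (T.le_succ_iff x x).2 (Or.inr (T.le_refl x))

theorem le_antisymm {x y : K} (hxy : T.le x y) (hyx : T.le y x) : x = y := by
  by_contra hne
  rcases (T.ne_iff x y).1 hne with h | h
  · exact T.le_iff_not_succ_le.1 hyx h
  · exact T.le_iff_not_succ_le.1 hxy h

theorem add_le_add_right {x y : K} (h : T.le x y) (z : K) :
    T.le (T.add x z) (T.add y z) := by
  rcases T.le_total (T.add x z) (T.add y z) with h' | h'
  · exact h'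
  · rw [T.le_antisymm h (T.le_of_add_le_add y x z h')]
    exact T.le_refl _

theorem mul_le_mul_right {x y z : K} (hz : z ≠ T.zero) (h : T.le x y) :
    T.le (T.mul x z) (T.mul y z) := by
  rcases T.le_total (T.mul x z) (T.mul y z) with h' | h'
  · exact h'
  · rw [T.le_antisymm h (T.le_of_mul_le_mul y x z hz h')]
    exact T.le_refl _

theorem le_add_or_exists_eq_add {b x y : K} (hb : T.le b (T.add x y)) :
    T.le b y ∨ ∃ z, T.le z x ∧ b = T.add z y := by
  by_cases hby : T.le b y
  · exact Or.inl hby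
  have hyb : T.le y b := T.le_trans _ _ _ (T.le_succ_self y) ((T.not_le_iff b y).1 hby)
  obtain ⟨z, rfl⟩ := T.exists_add_of_le y b hyb
  refine Or.inr ⟨z, T.le_iff_not_succ_le.2 fun hxz => T.succ_not_le x ?_, rfl⟩
  exact T.le_of_add_le_add _ _ y (T.le_trans _ _ _ (T.add_le_add_right hxz y) hb)

theorem exists_eq_add_mul_of_le_mul {b x y : K} (hy : y ≠ T.zero) (hb : T.le b (T.mul x y)) :
    ∃ q r, T.le q x ∧ T.le r y ∧ b = T.add r (T.mul q y) := by
  obtain ⟨q, r, rfl, hr⟩ := T.exists_div_mod b y hy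
  refine ⟨q, r, T.le_iff_not_succ_le.2 fun hxq => T.succ_not_le x ?_, hr, rfl⟩
  have hqb : T.le (T.mul q y) (T.add r (T.mul q y)) := T.le_add_left _ r
  exact T.le_of_mul_le_mul _ _ y hy
    (T.le_trans _ _ _ (T.mul_le_mul_right hy hxq) (T.le_trans _ _ _ hqb hb))

/-- The closure of `{x | x ≤ a}` under `0, S, +, ·`. -/
def termClosure (a : K) : Set K :=
  {b | ∃ (m : ℕ) (s : ATerm m) (jv : Fin m → K), (∀ k, T.le (jv k) a) ∧ b = s.eval T jv}

variable {T} {a : K}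

theorem mem_termClosure_of_le {b : K} (h : T.le b a) : b ∈ T.termClosure a :=
  ⟨1, .var 0, fun _ => b, fun _ => h, rfl⟩

theorem zero_mem_termClosure : T.zero ∈ T.termClosure a :=
  ⟨0, .zero, Fin.elim0, fun k => k.elim0, rfl⟩

theorem succ_mem_termClosure {x : K} (hx : x ∈ T.termClosure a) :
    T.succ x ∈ T.termClosure a := by
  obtain ⟨m, s, jv, hjv, rfl⟩ := hx
  exact ⟨m, .succ s, jv, hjv, rfl⟩

theorem exists_common_assignment {x y : K} (hx : x ∈ T.termClosure a)
    (hy : y ∈ T.termClosure a) :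
    ∃ (m : ℕ) (s₁ s₂ : ATerm m) (jv : Fin m → K),
      (∀ k, T.le (jv k) a) ∧ x = s₁.eval T jv ∧ y = s₂.eval T jv := by
  obtain ⟨m₁, s₁, jv₁, hjv₁, rfl⟩ := hx
  obtain ⟨m₂, s₂, jv₂, hjv₂, rfl⟩ := hy
  refine ⟨m₁ + m₂, s₁.rename (Fin.castAdd m₂), s₂.rename (Fin.natAdd m₁),
    Fin.append jv₁ jv₂, Fin.addCases (by simpa using hjv₁) (by simpa using hjv₂), ?_, ?_⟩
  all_goals simp [ATerm.eval_rename, Function.comp_def]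

theorem add_mem_termClosure {x y : K} (hx : x ∈ T.termClosure a)
    (hy : y ∈ T.termClosure a) : T.add x y ∈ T.termClosure a := by
  obtain ⟨m, s₁, s₂, jv, hjv, rfl, rfl⟩ := exists_common_assignment hx hy
  exact ⟨m, .add s₁ s₂, jv, hjv, rfl⟩

theorem mul_mem_termClosure {x y : K} (hx : x ∈ T.termClosure a)
    (hy : y ∈ T.termClosure a) : T.mul x y ∈ T.termClosure a := by
  obtain ⟨m, s₁, s₂, jv, hjv, rfl, rfl⟩ := exists_common_assignment hx hy
  exact ⟨m, .mul s₁ s₂, jv, hjv, rfl⟩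

theorem mem_termClosure_of_le_eval {m : ℕ} (s : ATerm m) {jv : Fin m → K}
    (hjv : ∀ k, T.le (jv k) a) {b : K} (hb : T.le b (s.eval T jv)) :
    b ∈ T.termClosure a := by
  induction s generalizing b with
  | var k => exact mem_termClosure_of_le (T.le_trans _ _ _ hb (hjv k))
  | zero =>
    rw [(T.le_zero_iff b).1 hb]
    exact zero_mem_termClosure
  | succ s ih =>
    rcases (T.le_succ_iff _ _).1 hb with rfl | hb
    · exact succ_mem_termClosure (ih (T.le_refl _))
    · exact ih hb
  | add s₁ s₂ ih₁ ih₂ =>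
    rcases T.le_add_or_exists_eq_add hb with hb | ⟨z, hz, rfl⟩
    · exact ih₂ hb
    · exact add_mem_termClosure (ih₁ hz) (ih₂ (T.le_refl _))
  | mul s₁ s₂ ih₁ ih₂ =>
    by_cases hy : s₂.eval T jv = T.zero
    · rw [(T.le_zero_iff b).1 (by simpa [ATerm.eval, hy, T.mul_zero] using hb)]
      exact zero_mem_termClosure
    obtain ⟨q, r, hq, hr, rfl⟩ := T.exists_eq_add_mul_of_le_mul hy hb
    exact add_mem_termClosure (ih₂ hr) (mul_mem_termClosure (ih₁ hq) (ih₂ (T.le_refl _)))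

theorem mem_termClosure_of_le_of_mem {x b : K} (hx : x ∈ T.termClosure a) (hb : T.le b x) :
    b ∈ T.termClosure a := by
  obtain ⟨m, s, jv, hjv, rfl⟩ := hx
  exact mem_termClosure_of_le_eval s hjv hb

end T1Structure

/-- Let `K` be a `T₁`-structure and `a ∈ K`.  For every `L_A`-term
`t(x₁,…,xₙ)`, all `i₁,…,iₙ ∈ K` with `i₁ ≤ a, …, iₙ ≤ a`, and every `b ∈ K` with
`b ≤ t(i₁,…,iₙ)` in `K`, there exist an `L_A`-term `s(x₁,…,x_m)` and elements
`j₁,…,j_m ∈ K` with `j₁ ≤ a, …, j_m ≤ a` such that `b = s(j₁,…,j_m)` in `K`. -/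
theorem T1Structure.term_closure_downward_closed
    (K : Type) (T : T1Structure K) (a : K) (n : ℕ) (t : ATerm n)
    (iv : Fin n → K) (hiv : ∀ k, T.le (iv k) a) (b : K)
    (hb : T.le b (t.eval T iv)) :
    ∃ (m : ℕ) (s : ATerm m) (jv : Fin m → K),
      (∀ k, T.le (jv k) a) ∧ b = s.eval T jv :=
  T1Structure.mem_termClosure_of_le_of_mem ⟨n, t, iv, hiv, rfl⟩ hb
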